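/- Let 0 < ε ≤ 2/(nL(2C+1)) for some C > 0, and suppose the sequences {x^k}, {x̃^k}, {d^k}, {α^k} are generated by the AS-SIMPLEX scheme: x^0 ∈ Δ; at each k with x^k non-stationary, A^k = A(x^k), N^k = N(x^k), j is chosen in N^k ∩ J(x^k), x̃^k is defined by x̃^k_i = 0 for i ∈ A^k, x̃^k_i = x^k_i for i ∈ N^k \ {j}, x̃^k_j = x^k_j + Σ_{h∈A^k} x^k_h; d^k is a feasible direction at x̃^k with d^k_{A^k} = 0 belonging to an active-set gradient related sequence (i.e., for any subsequence K with N(x^k) = N̂ fixed and x^k → x* with x* non-stationary in Δ_{N̂}: {d^k}_K is bounded, limsup_{k∈K} ∇f(x̃^k)ᵀd^k < 0, and liminf_{k∈K} α^k_max ≥ M > 0, where α^k_max is the maximum feasible stepsize along d^k from x̃^k); if ∇f(x̃^k)ᵀd^k < 0 then α^k ∈ (0, α^k_max] is computed by the Armijo line search with parameters δ, γ ∈ (0,1) (α^k is the largest stepsize of the form δ^m α^k_max, m ≥ 0, satisfying f(x̃^k + α d^k) ≤ f(x̃^k) + γ α ∇f(x̃^k)ᵀd^k), otherwise α^k = 0;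 and x^{k+1} = x̃^k + α^k d^k. Then either some x^k̄ is a stationary point of min_{x∈Δ} f(x), or the sequence {x^k} is infinite and every limit point of {x^k} is a stationary point of min_{x∈Δ} f(x). -/

import Mathlib

open scoped BigOperators Topology Classical

noncomputable section

/-- The unit simplex in `ℝⁿ`. -/
def unitSimplex (n : ℕ) : Set (EuclideanSpace ℝ (Fin n)) :=
  {x | (∑ i, x i) = 1 ∧ ∀ i, 0 ≤ x i}

/-- The face `Δ_I = {x ∈ Δ : xᵢ = 0 ∀ i ∉ I}` of the unit simplex. -/
def simplexFace (n : ℕ) (I : Set (Fin n)) : Set (EuclideanSpace ℝ (Fin n)) :=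
  {x | x ∈ unitSimplex n ∧ ∀ i ∉ I, x i = 0}

/-- A point of the unit simplex is stationary for `min_{x ∈ Δ} f(x)` if the KKT
conditions hold. -/
def IsStationaryPt {n : ℕ} (f : EuclideanSpace ℝ (Fin n) → ℝ)
    (x : EuclideanSpace ℝ (Fin n)) : Prop :=
  x ∈ unitSimplex n ∧
    ∃ (lam : ℝ) (mu : Fin n → ℝ),
      (∀ i, gradient f x i - lam - mu i = 0) ∧
      (∑ i, mu i * x i) = 0 ∧
      (∀ i, 0 ≤ mu i)

/-- The active-set estimate `A(x) = {i : xᵢ ≤ ε ∇f(x)ᵀ(eᵢ - x)}`, as a finset. -/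
def activeFinset {n : ℕ} (f : EuclideanSpace ℝ (Fin n) → ℝ) (eps : ℝ)
    (x : EuclideanSpace ℝ (Fin n)) : Finset (Fin n) :=
  Finset.univ.filter
    (fun i => x i ≤ eps * ∑ j, gradient f x j * (EuclideanSpace.single i (1 : ℝ) j - x j))

/-- The nonactive-set estimate `N(x) = {i : xᵢ > ε ∇f(x)ᵀ(eᵢ - x)}`. -/
def nonactiveEstimate {n : ℕ} (f : EuclideanSpace ℝ (Fin n) → ℝ) (eps : ℝ)
    (x : EuclideanSpace ℝ (Fin n)) : Set (Fin n) :=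
  {i | eps * ∑ j, gradient f x j * (EuclideanSpace.single i (1 : ℝ) j - x j) < x i}

/-!
Both moves `x ↦ x̃ ↦ x̃ + α d` of an iteration decrease `f`: the first because, for
`ε n L ≤ 2`, the first-order gain from emptying the active-set estimate dominates the
quadratic penalty of the descent lemma; the second by the Armijo condition. As `f` is bounded
below on `Δ`, the Armijo decreases `αᵏ ∇f(x̃ᵏ)ᵀdᵏ` tend to zero. If a limit point `x*` were not
stationary, along a subsequence with fixed `N(xᵏ) = N̂` and fixed selected index `j`, the vertex
`e_j` is a descent direction in `Δ_N̂`, so the directions are gradient related there. Then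
`αᵏ → 0` while `αᵏ_max` stays away from zero, so eventually the stepsize `αᵏ / δ` was rejected,
and the descent lemma turns this rejection into `-∇f(x̃ᵏ)ᵀdᵏ = O(αᵏ)`, contradicting
`limsup ∇f(x̃ᵏ)ᵀdᵏ < 0`.
-/

open Filter
open scoped RealInnerProductSpace

lemma add_smul_mem_of_isGreatest {V : Type*} [AddCommGroup V] [Module ℝ V] {s : Set V}
    (hs : Convex ℝ s) {p d : V} {amax a : ℝ}
    (hp : p ∈ s) (hmax : IsGreatest {a : ℝ | 0 ≤ a ∧ p + a • d ∈ s} amax)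
    (ha : a ∈ Set.Icc 0 amax) : p + a • d ∈ s := by
  rcases ha.2.eq_or_lt with rfl | hlt
  · exact hmax.1.2
  have hamax : 0 < amax := ha.1.trans_lt hlt
  have hmem := hs.add_smul_mem hp hmax.1.2 (t := a / amax)
    ⟨div_nonneg ha.1 hamax.le, div_le_one_of_le₀ hlt.le hamax.le⟩
  rwa [smul_smul, div_mul_cancel₀ a hamax.ne'] at hmem

section Smooth

variable {E : Type*} [NormedAddCommGroup E] [InnerProductSpace ℝ E] [CompleteSpace E]
  {f : E → ℝ}

theorem ContDiff.continuous_gradient (hf : ContDiff ℝ 1 f) : Continuous (gradient f) :=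
  (InnerProductSpace.toDual ℝ E).symm.continuous.comp (hf.continuous_fderiv one_ne_zero)

lemma hasDerivAt_comp_add_smul {p v : E} {t : ℝ} (hf : DifferentiableAt ℝ f (p + t • v)) :
    HasDerivAt (fun s : ℝ => f (p + s • v)) ⟪gradient f (p + t • v), v⟫ t := by
  have hline : HasDerivAt (fun s : ℝ => p + s • v) v t := by
    simpa using ((hasDerivAt_id t).smul_const v).const_add p
  exact (hf.hasFDerivAt.comp_hasDerivAt t hline).congr_deriv
    InnerProductSpace.toDual_symm_apply.symm

theorem le_add_inner_gradient_add_sq {s : Set E} (hs : Convex ℝ s)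
    (hf : ∀ y ∈ s, DifferentiableAt ℝ f y) {L : ℝ}
    (hLip : ∀ a ∈ s, ∀ b ∈ s, ‖gradient f a - gradient f b‖ ≤ L * ‖a - b‖)
    {p q : E} (hp : p ∈ s) (hq : q ∈ s) :
    f q ≤ f p + ⟪gradient f p, q - p⟫ + L / 2 * ‖q - p‖ ^ 2 := by
  set v := q - p
  have hseg : ∀ t ∈ Set.Icc (0 : ℝ) 1, p + t • v ∈ s := fun t ht =>
    hs.add_smul_mem hp (by simpa [v] using hq) ht
  -- the gap between the quadratic upper model and `f` along the segment is nondecreasing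
  set G : ℝ → ℝ := fun t => f p + t * ⟪gradient f p, v⟫ + t ^ 2 * (L / 2 * ‖v‖ ^ 2) - f (p + t • v)
  have hG : ∀ t ∈ Set.Icc (0 : ℝ) 1, HasDerivAt G
      (⟪gradient f p, v⟫ + 2 * t * (L / 2 * ‖v‖ ^ 2) - ⟪gradient f (p + t • v), v⟫) t := by
    intro t ht
    have hquad := (((hasDerivAt_id t).mul_const ⟪gradient f p, v⟫).const_add (f p)).add
      ((hasDerivAt_pow 2 t).mul_const (L / 2 * ‖v‖ ^ 2))
    refine (hquad.sub (hasDerivAt_comp_add_smul (hf _ (hseg t ht)))).congr_deriv ?_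
    ring
  have hmono : MonotoneOn G (Set.Icc 0 1) := by
    refine monotoneOn_of_hasDerivWithinAt_nonneg (convex_Icc 0 1)
      (fun t ht => (hG t ht).continuousAt.continuousWithinAt)
      (fun t ht => (hG t (interior_subset ht)).hasDerivWithinAt) fun t ht => ?_
    rw [interior_Icc] at ht
    have hlip : ‖gradient f (p + t • v) - gradient f p‖ ≤ L * (t * ‖v‖) := by
      simpa [norm_smul, abs_of_pos ht.1] using
        hLip _ (hseg t (Set.Ioo_subset_Icc_self ht)) p hp
    have hinner : ⟪gradient f (p + t • v) - gradient f p, v⟫ ≤ L * (t * ‖v‖) * ‖v‖ :=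
      (real_inner_le_norm _ _).trans (mul_le_mul_of_nonneg_right hlip (norm_nonneg v))
    rw [inner_sub_left] at hinner
    nlinarith
  have h01 := hmono (Set.left_mem_Icc.2 zero_le_one) (Set.right_mem_Icc.2 zero_le_one) zero_le_one
  simp only [G, v, zero_mul, one_mul, ne_eq, OfNat.ofNat_ne_zero, not_false_eq_true, zero_pow,
    one_pow, zero_smul, one_smul, add_zero, sub_self, add_sub_cancel] at h01
  linarith

end Smooth

section LineSearch

variable {E : Type*} [NormedAddCommGroup E] [InnerProductSpace ℝ E] [CompleteSpace E]
  {f : E → ℝ}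

def IsArmijoStep (f : E → ℝ) (δ γ : ℝ) (p d : E) (amax α : ℝ) : Prop :=
  (⟪gradient f p, d⟫ < 0 →
    α ∈ Set.Ioc 0 amax ∧ ∃ m : ℕ, α = δ ^ m * amax ∧
      f (p + α • d) ≤ f p + γ * α * ⟪gradient f p, d⟫ ∧
      ∀ m' < m, ¬ (f (p + (δ ^ m' * amax) • d) ≤
        f p + γ * (δ ^ m' * amax) * ⟪gradient f p, d⟫)) ∧
  (¬ ⟪gradient f p, d⟫ < 0 → α = 0)

namespace IsArmijoStep

variable {δ γ amax α : ℝ} {p d : E}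

lemma mem_Icc (h : IsArmijoStep f δ γ p d amax α) (hamax : 0 ≤ amax) : α ∈ Set.Icc 0 amax := by
  by_cases hg : ⟪gradient f p, d⟫ < 0
  · exact Set.Ioc_subset_Icc_self (h.1 hg).1
  · rw [h.2 hg]
    exact ⟨le_rfl, hamax⟩

lemma le_add_mul_inner (h : IsArmijoStep f δ γ p d amax α) :
    f (p + α • d) ≤ f p + γ * (α * ⟪gradient f p, d⟫) := by
  by_cases hg : ⟪gradient f p, d⟫ < 0
  · obtain ⟨-, -, -, hdec, -⟩ := h.1 hg
    rwa [← mul_assoc]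
  · simp [h.2 hg]

lemma mul_inner_nonpos (h : IsArmijoStep f δ γ p d amax α) : α * ⟪gradient f p, d⟫ ≤ 0 := by
  by_cases hg : ⟪gradient f p, d⟫ < 0
  · exact mul_nonpos_of_nonneg_of_nonpos (h.1 hg).1.1.le hg.le
  · simp [h.2 hg]

/-- A step shorter than `amax` means that the stepsize `α / δ` was rejected, and the quadratic
upper bound turns that rejection into a bound on the slope. -/
lemma one_sub_mul_neg_inner_lt (h : IsArmijoStep f δ γ p d amax α) {s : Set E}
    (hs : Convex ℝ s) (hf : ∀ y ∈ s, DifferentiableAt ℝ f y) {L : ℝ}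
    (hLip : ∀ a ∈ s, ∀ b ∈ s, ‖gradient f a - gradient f b‖ ≤ L * ‖a - b‖)
    (hp : p ∈ s) (hmax : IsGreatest {a : ℝ | 0 ≤ a ∧ p + a • d ∈ s} amax)
    (hδ₀ : 0 < δ) (hδ₁ : δ ≤ 1) (hg : ⟪gradient f p, d⟫ < 0) (hα : α < amax) :
    (1 - γ) * -⟪gradient f p, d⟫ < L / (2 * δ) * α * ‖d‖ ^ 2 := by
  obtain ⟨⟨hα₀, -⟩, m, rfl, -, hrejected⟩ := h.1 hg
  obtain ⟨m, rfl⟩ : ∃ m', m = m' + 1 := Nat.exists_eq_succ_of_ne_zero <| by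
    rintro rfl
    simp at hα
  set β := δ ^ m * amax
  have hβ : 0 < β := pos_of_mul_pos_right (by rwa [pow_succ', mul_assoc] at hα₀) hδ₀.le
  have hβle : β ≤ amax := mul_le_of_le_one_left hmax.1.1 (pow_le_one₀ hδ₀.le hδ₁)
  have hdescent := le_add_inner_gradient_add_sq hs hf hLip hp
    (add_smul_mem_of_isGreatest hs hp hmax ⟨hβ.le, hβle⟩)
  rw [add_sub_cancel_left, inner_smul_right, norm_smul, Real.norm_eq_abs, abs_of_pos hβ]
    at hdescent
  have hlt := lt_of_not_ge (hrejected m (Nat.lt_succ_self m))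
  have hkey : β * ((1 - γ) * -⟪gradient f p, d⟫) < β * (L / 2 * β * ‖d‖ ^ 2) := by
    nlinarith
  calc (1 - γ) * -⟪gradient f p, d⟫ < L / 2 * β * ‖d‖ ^ 2 := lt_of_mul_lt_mul_left hkey hβ.le
    _ = L / (2 * δ) * (δ ^ (m + 1) * amax) * ‖d‖ ^ 2 := by
      field_simp
      ring

end IsArmijoStep

end LineSearch

section Sequences

theorem tendsto_zero_of_le_add_mul {u c : ℕ → ℝ} {γ : ℝ} (hγ : 0 < γ)
    (hu : BddBelow (Set.range u)) (hc : ∀ k, c k ≤ 0) (hdec : ∀ k, u (k + 1) ≤ u k + γ * c k) :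
    Tendsto c atTop (𝓝 0) := by
  have hanti : Antitone u := antitone_nat_of_succ_le fun k => by
    nlinarith [hdec k, hc k]
  have hlim := tendsto_atTop_ciInf hanti hu
  have hdiff : Tendsto (fun k => (u (k + 1) - u k) / γ) atTop (𝓝 0) := by
    simpa using ((hlim.comp (tendsto_add_atTop_nat 1)).sub hlim).div_const γ
  refine tendsto_of_tendsto_of_tendsto_of_le_of_le hdiff tendsto_const_nhds (fun k => ?_) hc
  rw [div_le_iff₀ hγ]
  linarith [hdec k]

variable {ι : Type*} {l : Filter ι}

/-- In `ℝ` an unbounded `limsup` takes the junk value `sInf ∅ = 0`, so a negative `limsup`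
forces boundedness. -/
theorem exists_neg_eventually_lt_of_limsup_neg {u : ι → ℝ} (h : limsup u l < 0) :
    ∃ b < 0, ∀ᶠ k in l, u k < b := by
  have hbdd : IsBoundedUnder (· ≤ ·) l u := by
    by_contra hb
    have hempty : {a | ∀ᶠ k in l, u k ≤ a} = ∅ :=
      Set.eq_empty_of_forall_notMem fun a ha => hb ⟨a, ha⟩
    rw [limsup_eq, hempty, Real.sInf_empty] at h
    exact lt_irrefl _ h
  exact ⟨limsup u l / 2, by linarith, eventually_lt_of_limsup_lt (by linarith) hbdd⟩

theorem tendsto_zero_of_tendsto_mul_of_eventually_lt {a g : ι → ℝ} {b : ℝ} (hb : b < 0)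
    (ha : ∀ k, 0 ≤ a k) (hg : ∀ᶠ k in l, g k < b) (h : Tendsto (fun k => a k * g k) l (𝓝 0)) :
    Tendsto a l (𝓝 0) := by
  refine tendsto_of_tendsto_of_tendsto_of_le_of_le' tendsto_const_nhds
    (by simpa using h.div_const b) (Eventually.of_forall ha) ?_
  filter_upwards [hg] with k hk
  rw [le_div_iff_of_neg hb]
  exact mul_le_mul_of_nonneg_left hk.le (ha k)

theorem exists_strictMono_forall_eq {β : Type*} [Finite β] (P : ℕ → β) :
    ∃ b, ∃ χ : ℕ → ℕ, StrictMono χ ∧ ∀ k, P (χ k) = b := by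
  obtain ⟨b, hb⟩ : ∃ b, ∃ᶠ k in atTop, P k = b := by
    by_contra! h
    obtain ⟨k, hk⟩ := (eventually_all.2 h).exists
    exact hk _ rfl
  obtain ⟨χ, hχ, hP⟩ := extraction_of_frequently_atTop hb
  exact ⟨b, χ, hχ, hP⟩

end Sequences

section Convergence

variable {E : Type*} [NormedAddCommGroup E] [InnerProductSpace ℝ E] [CompleteSpace E]
  {f : E → ℝ}

theorem not_tendsto_armijo_decrease_zero {s : Set E} (hs : Convex ℝ s)
    (hf : ∀ y ∈ s, DifferentiableAt ℝ f y) {L : ℝ}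
    (hLip : ∀ a ∈ s, ∀ b ∈ s, ‖gradient f a - gradient f b‖ ≤ L * ‖a - b‖)
    {δ γ : ℝ} (hδ₀ : 0 < δ) (hδ₁ : δ ≤ 1) (hγ : γ < 1)
    {p d : ℕ → E} {amax α : ℕ → ℝ} (hp : ∀ k, p k ∈ s)
    (hmax : ∀ k, IsGreatest {a : ℝ | 0 ≤ a ∧ p k + a • d k ∈ s} (amax k))
    (harmijo : ∀ k, IsArmijoStep f δ γ (p k) (d k) (amax k) (α k))
    {B M : ℝ} (hB : ∀ k, ‖d k‖ ≤ B)
    (hslope : limsup (fun k => ⟪gradient f (p k), d k⟫) atTop < 0)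
    (hM : 0 < M) (hMle : M ≤ liminf amax atTop) :
    ¬ Tendsto (fun k => α k * ⟪gradient f (p k), d k⟫) atTop (𝓝 0) := by
  intro hdec
  obtain ⟨b, hb, hslope_lt⟩ := exists_neg_eventually_lt_of_limsup_neg hslope
  have hamax : ∀ᶠ k in atTop, M / 2 < amax k :=
    eventually_lt_of_lt_liminf (by linarith) (isBoundedUnder_of ⟨0, fun k => (hmax k).1.1⟩)
  have hα : Tendsto α atTop (𝓝 0) := tendsto_zero_of_tendsto_mul_of_eventually_lt hb
    (fun k => ((harmijo k).mem_Icc (hmax k).1.1).1) hslope_lt hdec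
  have hbound : Tendsto (fun k => L / (2 * δ) * α k * B ^ 2) atTop (𝓝 0) := by
    simpa using (hα.const_mul (L / (2 * δ))).mul_const (B ^ 2)
  obtain ⟨k, hgk, hamaxk, hαk, hboundk⟩ := (hslope_lt.and <| hamax.and <|
    (hα.eventually_lt_const (half_pos hM)).and <|
    hbound.eventually_lt_const (mul_pos (sub_pos.2 hγ) (neg_pos.2 hb))).exists
  have hrate := (harmijo k).one_sub_mul_neg_inner_lt hs hf hLip (hp k) (hmax k) hδ₀ hδ₁
    (hgk.trans hb) (hαk.trans hamaxk)
  have hpos : 0 < L / (2 * δ) * α k * ‖d k‖ ^ 2 :=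
    lt_trans (mul_pos (sub_pos.2 hγ) (by linarith)) hrate
  have hc : 0 ≤ L / (2 * δ) * α k := by
    by_contra! hc
    exact hpos.not_ge (mul_nonpos_of_nonpos_of_nonneg hc.le (sq_nonneg _))
  have hd := mul_le_mul_of_nonneg_left (pow_le_pow_left₀ (norm_nonneg _) (hB k) 2) hc
  linarith [mul_lt_mul_of_pos_left (neg_lt_neg hgk) (sub_pos.2 hγ)]

end Convergence

section Simplex

variable {n : ℕ}

lemma sum_mul_eq_inner {ι : Type*} [Fintype ι] (u v : EuclideanSpace ℝ ι) :
    ∑ i, u i * v i = ⟪u, v⟫ := by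
  simp [PiLp.inner_apply, mul_comm]

lemma sum_mul_single_sub (u x : EuclideanSpace ℝ (Fin n)) (i : Fin n) :
    ∑ j, u j * (EuclideanSpace.single i (1 : ℝ) j - x j) = u i - ⟪u, x⟫ := by
  simp_rw [← PiLp.sub_apply, sum_mul_eq_inner, inner_sub_right, EuclideanSpace.inner_single_right]
  simp

lemma unitSimplex_eq_preimage :
    unitSimplex n = EuclideanSpace.equiv (Fin n) ℝ ⁻¹' stdSimplex ℝ (Fin n) := by
  ext x
  exact and_comm

lemma isCompact_unitSimplex : IsCompact (unitSimplex n) := by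
  rw [unitSimplex_eq_preimage]
  exact (EuclideanSpace.equiv (Fin n) ℝ).toHomeomorph.isCompact_preimage.2
    (isCompact_stdSimplex ℝ (Fin n))

lemma convex_unitSimplex : Convex ℝ (unitSimplex n) := by
  rw [unitSimplex_eq_preimage]
  exact (convex_stdSimplex ℝ (Fin n)).linear_preimage
    (EuclideanSpace.equiv (Fin n) ℝ).toLinearEquiv.toLinearMap

lemma single_mem_simplexFace {I : Set (Fin n)} {j : Fin n} (hj : j ∈ I) :
    EuclideanSpace.single j (1 : ℝ) ∈ simplexFace n I := by
  refine ⟨⟨by simp, fun i => ?_⟩, fun i hi => ?_⟩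
  · by_cases hij : i = j <;> simp [hij]
  · simp [show i ≠ j by rintro rfl; exact hi hj]

variable {f : EuclideanSpace ℝ (Fin n) → ℝ}

/-- Otherwise `λ = ∂ⱼf(x)` and `μᵢ = ∂ᵢf(x) - ∂ⱼf(x)` would be KKT multipliers at `x`. -/
lemma sum_mul_single_sub_neg_of_not_isStationaryPt {x : EuclideanSpace ℝ (Fin n)}
    (hx : x ∈ unitSimplex n) {j : Fin n} (hj : ∀ i, gradient f x j ≤ gradient f x i)
    (hns : ¬ IsStationaryPt f x) :
    ∑ i, gradient f x i * (EuclideanSpace.single j (1 : ℝ) i - x i) < 0 := by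
  rw [sum_mul_single_sub]
  by_contra! hge
  have hsum : ∑ i, (gradient f x i - gradient f x j) * x i =
      ⟪gradient f x, x⟫ - gradient f x j := by
    simp only [sub_mul, Finset.sum_sub_distrib, ← Finset.mul_sum, hx.1, mul_one,
      sum_mul_eq_inner]
  have hnonneg : 0 ≤ ∑ i, (gradient f x i - gradient f x j) * x i :=
    Finset.sum_nonneg fun i _ => mul_nonneg (sub_nonneg.2 (hj i)) (hx.2 i)
  exact hns ⟨hx, gradient f x j, fun i => gradient f x i - gradient f x j, fun i => by ring,
    by linarith, fun i => sub_nonneg.2 (hj i)⟩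

end Simplex

section MoveMass

variable {n : ℕ}

lemma sum_ite_eq_add_sum {ι : Type*} [Fintype ι] [DecidableEq ι] {A : Finset ι} {j : ι}
    (hj : j ∉ A) (a : ℝ) (g : ι → ℝ) :
    ∑ i, (if i = j then a else if i ∈ A then g i else 0) = a + ∑ h ∈ A, g h := by
  rw [← Finset.add_sum_erase _ _ (Finset.mem_univ j), if_pos rfl,
    Finset.sum_congr rfl fun i hi => if_neg (Finset.ne_of_mem_erase hi), Finset.sum_ite_mem,
    Finset.inter_eq_right.2 fun h hh => Finset.mem_erase.2 ⟨by rintro rfl; exact hj hh, by simp⟩]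

/-- The point `x̃` of AS-SIMPLEX, where `A = A(x)`. -/
def moveMass (x : EuclideanSpace ℝ (Fin n)) (A : Finset (Fin n)) (j : Fin n) :
    EuclideanSpace ℝ (Fin n) :=
  WithLp.toLp 2 fun i => if i = j then x j + ∑ h ∈ A, x h else if i ∈ A then 0 else x i

variable {x : EuclideanSpace ℝ (Fin n)} {A : Finset (Fin n)} {j : Fin n}

lemma moveMass_sub_apply (hj : j ∉ A) (i : Fin n) :
    (moveMass x A j - x) i = if i = j then ∑ h ∈ A, x h else if i ∈ A then -x i else 0 := by
  rcases eq_or_ne i j with rfl | hij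
  · simp [moveMass]
  · by_cases hiA : i ∈ A <;> simp [moveMass, hij, hiA]

lemma moveMass_mem_unitSimplex (hx : x ∈ unitSimplex n) (hj : j ∉ A) :
    moveMass x A j ∈ unitSimplex n := by
  refine ⟨?_, fun i => ?_⟩
  · have hsum : ∑ i, (moveMass x A j - x) i = 0 := by
      simp only [moveMass_sub_apply hj, sum_ite_eq_add_sum hj, Finset.sum_neg_distrib,
        add_neg_cancel]
    simp only [PiLp.sub_apply, Finset.sum_sub_distrib, hx.1, sub_eq_zero] at hsum
    exact hsum
  · have hA : 0 ≤ ∑ h ∈ A, x h := Finset.sum_nonneg fun h _ => hx.2 h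
    simp only [moveMass, WithLp.ofLp_toLp]
    split_ifs
    exacts [add_nonneg (hx.2 j) hA, le_rfl, hx.2 i]

lemma inner_moveMass_sub (hj : j ∉ A) (u : EuclideanSpace ℝ (Fin n)) :
    ⟪u, moveMass x A j - x⟫ = ∑ h ∈ A, x h * (u j - u h) := by
  have hterm : ∀ i, u i * (moveMass x A j - x) i =
      if i = j then u j * ∑ h ∈ A, x h else if i ∈ A then u i * -x i else 0 := fun i => by
    rw [moveMass_sub_apply hj]
    split_ifs with hij <;> simp [hij]
  rw [← sum_mul_eq_inner, Finset.sum_congr rfl fun i _ => hterm i, sum_ite_eq_add_sum hj,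
    Finset.mul_sum, ← Finset.sum_add_distrib]
  exact Finset.sum_congr rfl fun h _ => by ring

lemma norm_moveMass_sub_sq_le (hj : j ∉ A) :
    ‖moveMass x A j - x‖ ^ 2 ≤ n * ∑ h ∈ A, x h ^ 2 := by
  have hcard : (A.card : ℝ) + 1 ≤ n := by
    have := Finset.card_lt_card (Finset.ssubset_iff_subset_ne.2
      ⟨Finset.subset_univ A, fun h => hj (h ▸ Finset.mem_univ j)⟩)
    rw [Finset.card_univ, Fintype.card_fin] at this
    exact_mod_cast this
  have hCS : (∑ h ∈ A, x h) ^ 2 ≤ A.card * ∑ h ∈ A, x h ^ 2 := sq_sum_le_card_mul_sum_sq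
  have hQ : 0 ≤ ∑ h ∈ A, x h ^ 2 := Finset.sum_nonneg fun h _ => sq_nonneg _
  rw [EuclideanSpace.real_norm_sq_eq]
  simp only [moveMass_sub_apply hj, apply_ite (· ^ 2), neg_sq, ne_eq, OfNat.ofNat_ne_zero,
    not_false_eq_true, zero_pow]
  rw [sum_ite_eq_add_sum hj]
  nlinarith

variable {f : EuclideanSpace ℝ (Fin n) → ℝ} {eps : ℝ}

lemma mem_activeFinset_iff {i : Fin n} :
    i ∈ activeFinset f eps x ↔ x i ≤ eps * (gradient f x i - ⟪gradient f x, x⟫) := by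
  simp only [activeFinset, Finset.mem_filter, Finset.mem_univ, true_and, sum_mul_single_sub]

lemma notMem_activeFinset_of_mem_nonactiveEstimate (hj : j ∈ nonactiveEstimate f eps x) :
    j ∉ activeFinset f eps x :=
  fun hA => (Finset.mem_filter.1 hA).2.not_gt hj

/-- Each unit of squared mass moved off the active-set estimate gains at least `1 / ε` to first
order, while the descent lemma charges at most `n L / 2` per unit: hence `ε n L ≤ 2`. -/
theorem moveMass_activeFinset_le (hf : ∀ y ∈ unitSimplex n, DifferentiableAt ℝ f y) {L : ℝ}
    (hL : 0 ≤ L)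
    (hLip : ∀ a ∈ unitSimplex n, ∀ b ∈ unitSimplex n,
      ‖gradient f a - gradient f b‖ ≤ L * ‖a - b‖)
    (heps : 0 < eps) (hepsL : eps * (n * L) ≤ 2) (hx : x ∈ unitSimplex n)
    (hjN : j ∈ nonactiveEstimate f eps x) (hjmin : ∀ i, gradient f x j ≤ gradient f x i) :
    f (moveMass x (activeFinset f eps x) j) ≤ f x := by
  set A := activeFinset f eps x
  set g := gradient f x
  set Q := ∑ h ∈ A, x h ^ 2 with hQ
  have hjA : j ∉ A := notMem_activeFinset_of_mem_nonactiveEstimate hjN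
  have hjx : g j ≤ ⟪g, x⟫ := by
    have := Finset.sum_le_sum fun i (_ : i ∈ Finset.univ) =>
      mul_le_mul_of_nonneg_left (hjmin i) (hx.2 i)
    rwa [← Finset.sum_mul, hx.1, one_mul, sum_mul_eq_inner, real_inner_comm] at this
  have hgain : ⟪g, moveMass x A j - x⟫ ≤ -(Q / eps) := by
    rw [inner_moveMass_sub hjA, hQ, Finset.sum_div, ← Finset.sum_neg_distrib]
    refine Finset.sum_le_sum fun h hh => ?_
    have hxh : x h / eps ≤ g h - ⟪g, x⟫ :=
      (div_le_iff₀ heps).2 (by linarith [mem_activeFinset_iff.1 hh])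
    have : x h * (g j - g h) ≤ x h * -(x h / eps) :=
      mul_le_mul_of_nonneg_left (by linarith) (hx.2 h)
    linarith [show x h * -(x h / eps) = -(x h ^ 2 / eps) by ring]
  have hpenalty : L / 2 * ‖moveMass x A j - x‖ ^ 2 ≤ Q / eps := by
    have hQ₀ : 0 ≤ Q := Finset.sum_nonneg fun h _ => sq_nonneg _
    calc L / 2 * ‖moveMass x A j - x‖ ^ 2 ≤ L / 2 * (n * Q) :=
          mul_le_mul_of_nonneg_left (norm_moveMass_sub_sq_le hjA) (by positivity)
      _ ≤ Q / eps := by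
          rw [le_div_iff₀ heps]
          nlinarith
  linarith [le_add_inner_gradient_add_sq convex_unitSimplex hf hLip hx
    (moveMass_mem_unitSimplex hx hjA)]

lemma mul_le_two_of_le_div {L C : ℝ} (hL : 0 < L) (hC : 0 < C)
    (heps : eps ≤ 2 / (n * L * (2 * C + 1))) : eps * (n * L) ≤ 2 := by
  rcases (Nat.cast_nonneg n : (0 : ℝ) ≤ n).eq_or_lt with hn | hn
  · simp [← hn]
  · have := (le_div_iff₀ (by positivity)).1 heps
    nlinarith [mul_pos hn hL]

theorem as_simplex_step_mem_and_le (hf : ∀ y ∈ unitSimplex n, DifferentiableAt ℝ f y) {L : ℝ}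
    (hL : 0 ≤ L)
    (hLip : ∀ a ∈ unitSimplex n, ∀ b ∈ unitSimplex n,
      ‖gradient f a - gradient f b‖ ≤ L * ‖a - b‖)
    (heps : 0 < eps) (hepsL : eps * (n * L) ≤ 2) (hx : x ∈ unitSimplex n)
    (hjN : j ∈ nonactiveEstimate f eps x) (hjmin : ∀ i, gradient f x j ≤ gradient f x i)
    {xt d : EuclideanSpace ℝ (Fin n)} (hxt : xt = moveMass x (activeFinset f eps x) j)
    {δ γ amax α : ℝ} (hmax : IsGreatest {a : ℝ | 0 ≤ a ∧ xt + a • d ∈ unitSimplex n} amax)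
    (harmijo : IsArmijoStep f δ γ xt d amax α) :
    xt ∈ unitSimplex n ∧ xt + α • d ∈ unitSimplex n ∧
      f (xt + α • d) ≤ f x + γ * (α * ⟪gradient f xt, d⟫) := by
  have hxt_mem : xt ∈ unitSimplex n :=
    hxt ▸ moveMass_mem_unitSimplex hx (notMem_activeFinset_of_mem_nonactiveEstimate hjN)
  have hxt_le : f xt ≤ f x := hxt ▸ moveMass_activeFinset_le hf hL hLip heps hepsL hx hjN hjmin
  exact ⟨hxt_mem, add_smul_mem_of_isGreatest convex_unitSimplex hxt_mem hmax
    (harmijo.mem_Icc hmax.1.1), by linarith [harmijo.le_add_mul_inner]⟩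

end MoveMass

section Stationarity

variable {n : ℕ} {f : EuclideanSpace ℝ (Fin n) → ℝ}

theorem exists_mem_simplexFace_sum_neg_of_tendsto (hf : ContDiff ℝ 1 f)
    {y : ℕ → EuclideanSpace ℝ (Fin n)} {ystar : EuclideanSpace ℝ (Fin n)}
    (hy : ∀ k, y k ∈ unitSimplex n) (hlim : Tendsto y atTop (𝓝 ystar)) {I : Set (Fin n)}
    {j : Fin n} (hjI : j ∈ I) (hjmin : ∀ k i, gradient f (y k) j ≤ gradient f (y k) i)
    (hns : ¬ IsStationaryPt f ystar) :
    ∃ z ∈ simplexFace n I, ∑ i, gradient f ystar i * (z i - ystar i) < 0 := by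
  have hmem : ystar ∈ unitSimplex n :=
    isCompact_unitSimplex.isClosed.mem_of_tendsto hlim (Eventually.of_forall hy)
  have hgrad : ∀ i, Tendsto (fun k => gradient f (y k) i) atTop (𝓝 (gradient f ystar i)) :=
    fun i => ((PiLp.continuous_apply 2 _ i).tendsto _).comp
      ((hf.continuous_gradient.tendsto ystar).comp hlim)
  exact ⟨_, single_mem_simplexFace hjI, sum_mul_single_sub_neg_of_not_isStationaryPt hmem
    (fun i => le_of_tendsto_of_tendsto' (hgrad j) (hgrad i) fun k => hjmin k i) hns⟩

theorem exists_subseq_sum_neg_in_simplexFace (hf : ContDiff ℝ 1 f) {eps : ℝ}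
    {x : ℕ → EuclideanSpace ℝ (Fin n)} {jsel : ℕ → Fin n} (hx : ∀ k, x k ∈ unitSimplex n)
    (hjsel : ∀ k, jsel k ∈ nonactiveEstimate f eps (x k) ∧
      ∀ i, gradient f (x k) (jsel k) ≤ gradient f (x k) i)
    {φ : ℕ → ℕ} (hφ : StrictMono φ) {xstar : EuclideanSpace ℝ (Fin n)}
    (hlim : Tendsto (x ∘ φ) atTop (𝓝 xstar)) (hns : ¬ IsStationaryPt f xstar) :
    ∃ ψ : ℕ → ℕ, StrictMono ψ ∧ ∃ Nhat : Set (Fin n),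
      (∀ k, nonactiveEstimate f eps (x (ψ k)) = Nhat) ∧ Tendsto (x ∘ ψ) atTop (𝓝 xstar) ∧
      ∃ y ∈ simplexFace n Nhat, ∑ i, gradient f xstar i * (y i - xstar i) < 0 := by
  obtain ⟨⟨Nhat, j⟩, χ, hχ, hconst⟩ :=
    exists_strictMono_forall_eq fun k => (nonactiveEstimate f eps (x (φ k)), jsel (φ k))
  have hN : ∀ k, nonactiveEstimate f eps (x (φ (χ k))) = Nhat :=
    fun k => congrArg Prod.fst (hconst k)
  have hj : ∀ k, jsel (φ (χ k)) = j := fun k => congrArg Prod.snd (hconst k)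
  have hlimχ : Tendsto (x ∘ φ ∘ χ) atTop (𝓝 xstar) := hlim.comp hχ.tendsto_atTop
  exact ⟨φ ∘ χ, hφ.comp hχ, Nhat, hN, hlimχ,
    exists_mem_simplexFace_sum_neg_of_tendsto hf (fun k => hx _) hlimχ
      (hN 0 ▸ hj 0 ▸ (hjsel _).1) (fun k i => hj k ▸ (hjsel _).2 i) hns⟩

end Stationarity

theorem as_simplex_global_convergence_general (n : ℕ)
    (f : EuclideanSpace ℝ (Fin n) → ℝ) (hf : ContDiff ℝ 1 f)
    (L C eps : ℝ) (hL : 0 < L) (hC : 0 < C)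
    (hLip : ∀ a ∈ unitSimplex n, ∀ b ∈ unitSimplex n,
      ‖gradient f a - gradient f b‖ ≤ L * ‖a - b‖)
    (heps : 0 < eps) (heps' : eps ≤ 2 / (n * L * (2 * C + 1)))
    (delta gamma : ℝ)
    (hdelta : delta ∈ Set.Ioo (0 : ℝ) 1) (hgamma : gamma ∈ Set.Ioo (0 : ℝ) 1)
    (x xt d : ℕ → EuclideanSpace ℝ (Fin n))
    (alpha alphamax : ℕ → ℝ) (jsel : ℕ → Fin n)
    (hx0 : x 0 ∈ unitSimplex n)
    -- at every iteration with `xᵏ` non-stationary, `j` is chosen in `Nᵏ ∩ J(xᵏ)`: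
    (hjsel : ∀ k, ¬ IsStationaryPt f (x k) →
      jsel k ∈ nonactiveEstimate f eps (x k) ∧
      ∀ i, gradient f (x k) (jsel k) ≤ gradient f (x k) i)
    -- definition of `x̃ᵏ`:
    (hxt : ∀ k, ¬ IsStationaryPt f (x k) →
      xt k = fun i => if i = jsel k then
          x k (jsel k) + ∑ h ∈ activeFinset f eps (x k), x k h
        else if i ∈ activeFinset f eps (x k) then 0 else x k i)
    -- `α^k_max` is the maximum feasible stepsize along `dᵏ` from `x̃ᵏ`:
    (hmax : ∀ k, ¬ IsStationaryPt f (x k) →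
      IsGreatest {a : ℝ | 0 ≤ a ∧ xt k + a • d k ∈ unitSimplex n} (alphamax k))
    -- the direction sequence is active-set gradient related:
    (hgradrel : ∀ φ : ℕ → ℕ, StrictMono φ →
      ∀ Nhat : Set (Fin n), (∀ k, nonactiveEstimate f eps (x (φ k)) = Nhat) →
      ∀ xstar, Filter.Tendsto (x ∘ φ) Filter.atTop (𝓝 xstar) →
      -- `x*` non-stationary in `Δ_N̂`:
      (∃ y ∈ simplexFace n Nhat, (∑ j, gradient f xstar j * (y j - xstar j)) < 0) →
      ((∃ B : ℝ, ∀ k, ‖d (φ k)‖ ≤ B) ∧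
       Filter.limsup (fun k => ∑ j, gradient f (xt (φ k)) j * d (φ k) j)
         Filter.atTop < 0 ∧
       ∃ M > (0 : ℝ), M ≤ Filter.liminf (fun k => alphamax (φ k)) Filter.atTop))
    -- Armijo line search if `∇f(x̃ᵏ)ᵀdᵏ < 0`, otherwise `αᵏ = 0`:
    (hls : ∀ k, ¬ IsStationaryPt f (x k) →
      (((∑ j, gradient f (xt k) j * d k j) < 0 →
        alpha k ∈ Set.Ioc (0 : ℝ) (alphamax k) ∧
        ∃ m : ℕ, alpha k = delta ^ m * alphamax k ∧
          f (xt k + alpha k • d k) ≤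
            f (xt k) + gamma * alpha k * ∑ j, gradient f (xt k) j * d k j ∧
          ∀ m' < m, ¬ (f (xt k + (delta ^ m' * alphamax k) • d k) ≤
            f (xt k) + gamma * (delta ^ m' * alphamax k) *
              ∑ j, gradient f (xt k) j * d k j)) ∧
       (¬ ((∑ j, gradient f (xt k) j * d k j) < 0) → alpha k = 0)))
    -- iterate update:
    (hstep : ∀ k, ¬ IsStationaryPt f (x k) → x (k + 1) = xt k + alpha k • d k) :
    (∃ kbar, IsStationaryPt f (x kbar)) ∨
    (∀ xstar : EuclideanSpace ℝ (Fin n),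
      (∃ φ : ℕ → ℕ, StrictMono φ ∧ Filter.Tendsto (x ∘ φ) Filter.atTop (𝓝 xstar)) →
      IsStationaryPt f xstar) := by
  by_cases hstop : ∃ kbar, IsStationaryPt f (x kbar)
  · exact Or.inl hstop
  push Not at hstop
  refine Or.inr fun xstar ⟨φ, hφ, hlim⟩ => ?_
  simp only [sum_mul_eq_inner] at hls hgradrel
  have harmijo : ∀ k, IsArmijoStep f delta gamma (xt k) (d k) (alphamax k) (alpha k) :=
    fun k => hls k (hstop k)
  have hdiff : ∀ y ∈ unitSimplex n, DifferentiableAt ℝ f y :=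
    fun y _ => hf.differentiable one_ne_zero y
  have hiter : ∀ k, x k ∈ unitSimplex n → xt k ∈ unitSimplex n ∧ x (k + 1) ∈ unitSimplex n ∧
      f (x (k + 1)) ≤ f (x k) + gamma * (alpha k * ⟪gradient f (xt k), d k⟫) := fun k hk =>
    hstep k (hstop k) ▸ as_simplex_step_mem_and_le hdiff hL.le hLip heps
      (mul_le_two_of_le_div hL hC heps') hk (hjsel k (hstop k)).1 (hjsel k (hstop k)).2
      ((WithLp.ext_iff _).2 (hxt k (hstop k))) (hmax k (hstop k)) (harmijo k)
  have hx : ∀ k, x k ∈ unitSimplex n := fun k => Nat.rec hx0 (fun k ih => (hiter k ih).2.1) k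
  have hvanish : Tendsto (fun k => alpha k * ⟪gradient f (xt k), d k⟫) atTop (𝓝 0) :=
    tendsto_zero_of_le_add_mul hgamma.1
      ((isCompact_unitSimplex.bddBelow_image hf.continuous.continuousOn).mono
        (Set.range_subset_iff.2 fun k => Set.mem_image_of_mem f (hx k)))
      (fun k => (harmijo k).mul_inner_nonpos) fun k => (hiter k (hx k)).2.2
  by_contra hns
  obtain ⟨ψ, hψ, Nhat, hN, hlimψ, hface⟩ := exists_subseq_sum_neg_in_simplexFace hf hx
    (fun k => hjsel k (hstop k)) hφ hlim hns
  obtain ⟨⟨B, hB⟩, hslope, M, hM, hMle⟩ := hgradrel ψ hψ Nhat hN xstar hlimψ hface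
  exact not_tendsto_armijo_decrease_zero (p := xt ∘ ψ) (d := d ∘ ψ) (amax := alphamax ∘ ψ)
    convex_unitSimplex hdiff hLip hdelta.1 hdelta.2.le hgamma.2 (fun k => (hiter _ (hx _)).1)
    (fun k => hmax _ (hstop _)) (fun k => harmijo _) hB hslope hM hMle
    (hvanish.comp hψ.tendsto_atTop)

/-- Global convergence of the AS-SIMPLEX framework with active-set gradient related
directions and Armijo line search: either some iterate is stationary, or every limit
point of the sequence of iterates is a stationary point. -/
theorem as_simplex_global_convergence (n : ℕ)
    (f : EuclideanSpace ℝ (Fin n) → ℝ) (hf : ContDiff ℝ 1 f)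
    (L C eps : ℝ) (hL : 0 < L) (hC : 0 < C)
    (hLip : ∀ a ∈ unitSimplex n, ∀ b ∈ unitSimplex n,
      ‖gradient f a - gradient f b‖ ≤ L * ‖a - b‖)
    (heps : 0 < eps) (heps' : eps ≤ 2 / (n * L * (2 * C + 1)))
    (delta gamma : ℝ)
    (hdelta : delta ∈ Set.Ioo (0 : ℝ) 1) (hgamma : gamma ∈ Set.Ioo (0 : ℝ) 1)
    (x xt d : ℕ → EuclideanSpace ℝ (Fin n))
    (alpha alphamax : ℕ → ℝ) (jsel : ℕ → Fin n)
    (hx0 : x 0 ∈ unitSimplex n)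
    -- at every iteration with `xᵏ` non-stationary, `j` is chosen in `Nᵏ ∩ J(xᵏ)`:
    (hjsel : ∀ k, ¬ IsStationaryPt f (x k) →
      jsel k ∈ nonactiveEstimate f eps (x k) ∧
      ∀ i, gradient f (x k) (jsel k) ≤ gradient f (x k) i)
    -- definition of `x̃ᵏ`:
    (hxt : ∀ k, ¬ IsStationaryPt f (x k) →
      xt k = fun i => if i = jsel k then
          x k (jsel k) + ∑ h ∈ activeFinset f eps (x k), x k h
        else if i ∈ activeFinset f eps (x k) then 0 else x k i)
    -- `dᵏ` vanishes on the estimated active set: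
    (hdA : ∀ k, ¬ IsStationaryPt f (x k) → ∀ i ∈ activeFinset f eps (x k), d k i = 0)
    -- `α^k_max` is the maximum feasible stepsize along `dᵏ` from `x̃ᵏ`:
    (hmax : ∀ k, ¬ IsStationaryPt f (x k) →
      IsGreatest {a : ℝ | 0 ≤ a ∧ xt k + a • d k ∈ unitSimplex n} (alphamax k))
    -- the direction sequence is active-set gradient related:
    (hgradrel : ∀ φ : ℕ → ℕ, StrictMono φ →
      ∀ Nhat : Set (Fin n), (∀ k, nonactiveEstimate f eps (x (φ k)) = Nhat) →
      ∀ xstar, Filter.Tendsto (x ∘ φ) Filter.atTop (𝓝 xstar) →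
      -- `x*` non-stationary in `Δ_N̂`:
      (∃ y ∈ simplexFace n Nhat, (∑ j, gradient f xstar j * (y j - xstar j)) < 0) →
      ((∃ B : ℝ, ∀ k, ‖d (φ k)‖ ≤ B) ∧
       Filter.limsup (fun k => ∑ j, gradient f (xt (φ k)) j * d (φ k) j)
         Filter.atTop < 0 ∧
       ∃ M > (0 : ℝ), M ≤ Filter.liminf (fun k => alphamax (φ k)) Filter.atTop))
    -- Armijo line search if `∇f(x̃ᵏ)ᵀdᵏ < 0`, otherwise `αᵏ = 0`:
    (hls : ∀ k, ¬ IsStationaryPt f (x k) →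
      (((∑ j, gradient f (xt k) j * d k j) < 0 →
        alpha k ∈ Set.Ioc (0 : ℝ) (alphamax k) ∧
        ∃ m : ℕ, alpha k = delta ^ m * alphamax k ∧
          f (xt k + alpha k • d k) ≤
            f (xt k) + gamma * alpha k * ∑ j, gradient f (xt k) j * d k j ∧
          ∀ m' < m, ¬ (f (xt k + (delta ^ m' * alphamax k) • d k) ≤
            f (xt k) + gamma * (delta ^ m' * alphamax k) *
              ∑ j, gradient f (xt k) j * d k j)) ∧
       (¬ ((∑ j, gradient f (xt k) j * d k j) < 0) → alpha k = 0)))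
    -- iterate update:
    (hstep : ∀ k, ¬ IsStationaryPt f (x k) → x (k + 1) = xt k + alpha k • d k) :
    (∃ kbar, IsStationaryPt f (x kbar)) ∨
    (∀ xstar : EuclideanSpace ℝ (Fin n),
      (∃ φ : ℕ → ℕ, StrictMono φ ∧ Filter.Tendsto (x ∘ φ) Filter.atTop (𝓝 xstar)) →
      IsStationaryPt f xstar) :=
  as_simplex_global_convergence_general n f hf L C eps hL hC hLip heps heps' delta gamma hdelta
    hgamma x xt d alpha alphamax jsel hx0 hjsel hxt hmax hgradrel hls hstep
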